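/- arXiv:1912.09457 — 7 statements merged into one kernel-verified Lean document; each statement's English description precedes it below -/
import Mathlib

section
/- Assume R is a local integral domain that is not a field, with principal maximal ideal 𝔪 = (p). Let I be a thick ideal of C_R all of whose objects are k-negligible (for example I = N_k). Then for every X ∈ I and a ∈ End(X) one has Tr_X(a) ∈ (p^k), so Tr^{(k)}_X(a) := p^{−k}·Tr_X(a) (the unique b ∈ R with p^k·b = Tr_X(a)) is well defined, and the family (Tr^{(k)}_X)_{X∈I} is a trace on I: (1) Tr^{(k)}_{U⊗W}(f) = Tr^{(k)}_U(E_U(f)) for all U ∈ I, W ∈ C_R and f ∈ End(U⊗W); (2) Tr^{(k)}_V(g∘f) = Tr^{(k)}_U(f∘g) for all U, V ∈ I and all f : V → U, g : U → V. -/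
/-!
STATEMENT 2. Assume `R` is a local integral domain that is not a field, with
principal maximal ideal `𝔪 = (p)`.  Let `I` be a thick ideal of `C_R` all of whose
objects are `k`-negligible (for example `I = N_k`).  Then for every `X ∈ I` and
`a ∈ End(X)` one has `Tr_X(a) ∈ (p^k)`, so `Tr^{(k)}_X(a) := p^{−k}·Tr_X(a)` (the
unique `b ∈ R` with `p^k·b = Tr_X(a)`) is well defined, and the family
`(Tr^{(k)}_X)_{X∈I}` is a trace on `I`:
(1) `Tr^{(k)}_{U⊗W}(f) = Tr^{(k)}_U(E_U(f))` for all `U ∈ I`, `W ∈ C_R` and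
    `f ∈ End(U⊗W)`;
(2) `Tr^{(k)}_V(g∘f) = Tr^{(k)}_U(f∘g)` for all `U, V ∈ I` and all `f : V → U`,
    `g : U → V`.
-/

open CategoryTheory MonoidalCategory

/-- A rigid spherical monoidal `R`-linear category, encoded through its spherical
trace functions on endomorphisms and their standard properties. -/
structure SphericalTraceData (R : Type*) [CommRing R] (C : Type*) [Category C]
    [MonoidalCategory C] [Preadditive C] [Linear R C] where
  /-- the spherical trace of an endomorphism, an `R`-linear function -/
  tr : ∀ X : C, (X ⟶ X) →ₗ[R] R
  /-- cyclicity of the trace -/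
  tr_comm : ∀ {X Y : C} (f : X ⟶ Y) (g : Y ⟶ X), tr X (f ≫ g) = tr Y (g ≫ f)
  /-- `End (𝟙_ C) = R` -/
  tr_unit : ∀ f : 𝟙_ C ⟶ 𝟙_ C, f = tr (𝟙_ C) f • 𝟙 (𝟙_ C)
  /-- multiplicativity of the trace on tensor products -/
  tr_tensor : ∀ {X Y : C} (a : X ⟶ X) (b : Y ⟶ Y),
      tr (X ⊗ Y) (a ⊗ₘ b) = tr X a * tr Y b
  /-- the partial trace (conditional expectation) onto the first factor -/
  E : ∀ X Y : C, (X ⊗ Y ⟶ X ⊗ Y) →ₗ[R] (X ⟶ X)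
  tr_E : ∀ {X Y : C} (a : X ⊗ Y ⟶ X ⊗ Y), tr X (E X Y a) = tr (X ⊗ Y) a
  /-- the partial trace (conditional expectation) onto the second factor -/
  E' : ∀ X Y : C, (X ⊗ Y ⟶ X ⊗ Y) →ₗ[R] (Y ⟶ Y)
  tr_E' : ∀ {X Y : C} (a : X ⊗ Y ⟶ X ⊗ Y), tr Y (E' X Y a) = tr (X ⊗ Y) a
  /-- rigidity/sphericality: a trace against a tensor product morphism `f ⊗ g`
  can be rewritten as a trace against `f` alone (Barrett–Westbury) -/
  tensorHom_trace_right : ∀ {X Y W Z : C} (f : X ⟶ Y) (g : W ⟶ Z) (h : Y ⊗ Z ⟶ X ⊗ W),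
      ∃ h' : Y ⟶ X, tr (X ⊗ W) ((f ⊗ₘ g) ≫ h) = tr X (f ≫ h')
  tensorHom_trace_left : ∀ {X Y W Z : C} (f : X ⟶ Y) (g : W ⟶ Z) (h : Z ⊗ Y ⟶ W ⊗ X),
      ∃ h' : Y ⟶ X, tr (W ⊗ X) ((g ⊗ₘ f) ≫ h) = tr X (f ≫ h')

/-- A thick (tensor) ideal of a monoidal category: a class of objects closed under
tensoring with arbitrary objects on either side and under retracts. -/
structure IsThickIdeal {C : Type*} [Category C] [MonoidalCategory C] (I : Set C) : Prop where
  tensor_right : ∀ X ∈ I, ∀ Y : C, X ⊗ Y ∈ I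
  tensor_left : ∀ X ∈ I, ∀ Y : C, Y ⊗ X ∈ I
  retract : ∀ {X Y : C}, Y ∈ I → ∀ (α : X ⟶ Y) (β : Y ⟶ X), α ≫ β = 𝟙 X → X ∈ I

variable {R : Type*} [CommRing R] {C : Type*} [Category C] [MonoidalCategory C]
  [Preadditive C] [Linear R C]

/-- An object `X` is `I`-negligible if `Tr_X a ∈ I` for every endomorphism `a` of `X`. -/
def IsNegligibleObj (Θ : SphericalTraceData R C) (I : Ideal R) (X : C) : Prop :=
  ∀ a : X ⟶ X, Θ.tr X a ∈ I

/-!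
Since `𝔪 = (p)`, the ideal `𝔪 ^ k` is `(p ^ k)`, so the traces on `I` are divisible by `p ^ k`;
as `p ≠ 0` in a domain, `p ^ k` is regular, so the quotient `p⁻ᵏ ⬝ Tr` is a well-defined linear
functional and every identity between traces (partial trace, cyclicity) divides through by `p ^ k`.
-/

namespace LinearMap

variable {M N : Type*} [AddCommGroup M] [Module R M] [AddCommGroup N] [Module R N]

noncomputable def divOfDvd (φ : M →ₗ[R] R) {c : R} (hc : IsLeftRegular c) (hφ : ∀ m, c ∣ φ m) :
    M →ₗ[R] R :=
  (LinearEquiv.ofInjective (mulLeft R c) hc).symm.toLinearMap ∘ₗ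
    φ.codRestrict (range (mulLeft R c)) fun m => mem_range.mpr ((hφ m).imp fun _ hb => hb.symm)

variable {c : R} (hc : IsLeftRegular c)

theorem mul_divOfDvd (φ : M →ₗ[R] R) (hφ : ∀ m, c ∣ φ m) (m : M) :
    c * φ.divOfDvd hc hφ m = φ m := by
  rw [divOfDvd, comp_apply, LinearEquiv.coe_toLinearMap, ← mulLeft_apply R,
    ← LinearEquiv.ofInjective_apply (mulLeft R c) (h := hc), LinearEquiv.apply_symm_apply,
    codRestrict_apply]

theorem eq_divOfDvd_iff (φ : M →ₗ[R] R) (hφ : ∀ m, c ∣ φ m) (m : M) (b : R) :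
    b = φ.divOfDvd hc hφ m ↔ c * b = φ m := by
  rw [← mul_divOfDvd hc φ hφ m]
  exact hc.eq_iff.symm

theorem divOfDvd_apply_eq {φ : M →ₗ[R] R} {ψ : N →ₗ[R] R} (hφ : ∀ m, c ∣ φ m)
    (hψ : ∀ n, c ∣ ψ n) {m : M} {n : N} (h : φ m = ψ n) :
    φ.divOfDvd hc hφ m = ψ.divOfDvd hc hψ n :=
  hc ((mul_divOfDvd hc φ hφ m).trans (h.trans (mul_divOfDvd hc ψ hψ n).symm))

end LinearMap

theorem IsLocalRing.ne_zero_of_maximalIdeal_eq_span [IsLocalRing R] (hR : ¬IsField R) {p : R}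
    (hp : maximalIdeal R = Ideal.span {p}) : p ≠ 0 := by
  rintro rfl
  exact hR (isField_iff_maximalIdeal_eq.mpr (hp.trans Ideal.span_singleton_zero))

theorem IsNegligibleObj.pow_dvd_tr [IsLocalRing R] {Θ : SphericalTraceData R C} {p : R}
    (hp : IsLocalRing.maximalIdeal R = Ideal.span {p}) {k : ℕ} {X : C}
    (hX : IsNegligibleObj Θ (IsLocalRing.maximalIdeal R ^ k) X) (a : X ⟶ X) :
    p ^ k ∣ Θ.tr X a := by
  have := hX a
  rwa [hp, Ideal.span_singleton_pow, Ideal.mem_span_singleton] at this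

theorem modifiedTrace_exists [IsLocalRing R] [IsDomain R] (hR : ¬ IsField R)
    (p : R) (hp : IsLocalRing.maximalIdeal R = Ideal.span {p})
    (Θ : SphericalTraceData R C) (k : ℕ)
    (I : Set C) (hI : IsThickIdeal I)
    (hneg : ∀ X ∈ I, IsNegligibleObj Θ ((IsLocalRing.maximalIdeal R) ^ k) X) :
    -- for `X ∈ I` every endomorphism has trace in `(p^k)` ...
    (∀ X ∈ I, ∀ a : X ⟶ X, Θ.tr X a ∈ Ideal.span {p ^ k}) ∧
    -- (unique) family of `R`-linear functions, and it is a trace on `I`: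
    ∃ t : ∀ X : C, X ∈ I → ((X ⟶ X) →ₗ[R] R),
      (∀ (X : C) (hX : X ∈ I) (a : X ⟶ X), p ^ k * t X hX a = Θ.tr X a) ∧
      (∀ (X : C) (hX : X ∈ I) (a : X ⟶ X) (b : R),
          p ^ k * b = Θ.tr X a → b = t X hX a) ∧
      -- (1) compatibility with the partial trace
      (∀ (U : C) (hU : U ∈ I) (W : C) (f : U ⊗ W ⟶ U ⊗ W),
          t (U ⊗ W) (hI.tensor_right U hU W) f = t U hU (Θ.E U W f)) ∧
      -- (2) cyclicity
      (∀ (U V : C) (hU : U ∈ I) (hV : V ∈ I) (f : V ⟶ U) (g : U ⟶ V),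
          t V hV (f ≫ g) = t U hU (g ≫ f)) := by
  have hpk : IsLeftRegular (p ^ k) :=
    (IsRegular.of_ne_zero (pow_ne_zero k
      (IsLocalRing.ne_zero_of_maximalIdeal_eq_span hR hp))).left
  have hdvd : ∀ X ∈ I, ∀ a : X ⟶ X, p ^ k ∣ Θ.tr X a := fun X hX => (hneg X hX).pow_dvd_tr hp
  refine ⟨fun X hX a => Ideal.mem_span_singleton.mpr (hdvd X hX a),
    fun X hX => (Θ.tr X).divOfDvd hpk (hdvd X hX),
    fun X hX => LinearMap.mul_divOfDvd hpk _ (hdvd X hX),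
    fun X hX a b => (LinearMap.eq_divOfDvd_iff hpk _ (hdvd X hX) a b).mpr,
    fun U hU W f => LinearMap.divOfDvd_apply_eq hpk _ _ (Θ.tr_E f).symm,
    fun U V hU hV f g => LinearMap.divOfDvd_apply_eq hpk _ _ (Θ.tr_comm f g)⟩
end

section
/- Let R be a discrete valuation ring with uniformizer p and residue field k, and let X be an object of C_R such that End(X) is a finitely generated free R-module and End(X) ⊗_R k is one-dimensional over k (equivalently, End(X) = R·id_X + 𝔪·End(X)). Then the ideal of R generated by {Tr_X(a) : a ∈ End(X)} equals the principal ideal (dim(X)). In particular, X ∈ N_k if and only if p^k divides dim(X), so the nullity of X equals v_p(dim(X)). -/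
/-!
STATEMENT 7. Let `R` be a discrete valuation ring with uniformizer `p` and residue
field `k`, and let `X` be an object of `C_R` such that `End(X)` is a finitely
generated free `R`-module and `End(X) ⊗_R k` is one-dimensional over `k`
(equivalently, `End(X) = R·id_X + 𝔪·End(X)`).  Then the ideal of `R` generated by
`{Tr_X(a) : a ∈ End(X)}` equals the principal ideal `(dim(X))`.  In particular
`X ∈ N_k` if and only if `p^k ∣ dim(X)`, so the nullity of `X` equals
`v_p(dim(X))`.
-/

open CategoryTheory MonoidalCategory

variable {R : Type*} [CommRing R] {C : Type*} [Category C] [MonoidalCategory C]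
  [Preadditive C] [Linear R C]

/-- The nullity of an object: the largest `k` with `X ∈ N_k` (as an element of `ℕ∞`). -/
noncomputable def nullity (Θ : SphericalTraceData R C) (p : R) (X : C) : ℕ∞ :=
  ⨆ k ∈ {k : ℕ | IsNegligibleObj Θ (Ideal.span {p} ^ k) X}, (k : ℕ∞)

open IsLocalRing

/-- Nakayama's lemma for the ideal `range f` (finitely generated as `R` is Noetherian):
each `f a` is `r * f m` modulo `𝔪 • range f`. -/
theorem LinearMap.range_eq_span_singleton_of_forall_sub_smul_mem {R M : Type*} [CommRing R]
    [IsLocalRing R] [IsNoetherianRing R] [AddCommGroup M] [Module R M] (f : M →ₗ[R] R) (m : M)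
    (h : ∀ a : M, ∃ r : R, a - r • m ∈ (maximalIdeal R • ⊤ : Submodule R M)) :
    LinearMap.range f = Ideal.span {f m} := by
  refine le_antisymm ?_ (Ideal.span_singleton_le_iff_mem _ |>.2 ⟨m, rfl⟩)
  have hle : LinearMap.range f ≤ Ideal.span {f m} ⊔ maximalIdeal R • LinearMap.range f := by
    rintro _ ⟨a, rfl⟩
    obtain ⟨r, hr⟩ := h a
    have hsplit : f a = r * f m + f (a - r • m) := by
      rw [map_sub, map_smul, smul_eq_mul]; ring
    have hrest : f (a - r • m) ∈ maximalIdeal R • LinearMap.range f := by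
      rw [LinearMap.range_eq_map, ← Submodule.map_smul'']
      exact Submodule.mem_map_of_mem hr
    rw [hsplit]
    exact Submodule.add_mem_sup (Ideal.mul_mem_left _ _ (Ideal.mem_span_singleton_self _)) hrest
  exact Submodule.le_of_le_smul_of_le_jacobson_bot (IsNoetherian.noetherian _)
    (maximalIdeal_le_jacobson ⊥) hle

theorem isNegligibleObj_iff_span_range_le (Θ : SphericalTraceData R C) (I : Ideal R) (X : C) :
    IsNegligibleObj Θ I X ↔ Ideal.span (Set.range (Θ.tr X)) ≤ I := by
  rw [Ideal.span_le, Set.range_subset_iff]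
  rfl

theorem trace_ideal_of_local_end_general [IsDomain R] [IsDiscreteValuationRing R]
    (p : R) (Θ : SphericalTraceData R C) (X : C)
    -- `End(X) = R·id_X + 𝔪·End(X)`, i.e. `End(X) ⊗ R/𝔪` is one-dimensional
    (hEnd : ∀ a : X ⟶ X, ∃ r : R,
        a - r • 𝟙 X ∈ (IsLocalRing.maximalIdeal R • ⊤ : Submodule R (X ⟶ X))) :
    -- the ideal generated by all traces of endomorphisms of `X` is `(dim X)`
    Ideal.span (Set.range (Θ.tr X)) = Ideal.span {Θ.tr X (𝟙 X)} ∧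
    -- in particular `X ∈ N_k ↔ p^k ∣ dim X`
    (∀ k : ℕ, IsNegligibleObj Θ (Ideal.span {p} ^ k) X ↔ p ^ k ∣ Θ.tr X (𝟙 X)) ∧
    -- so the nullity of `X` is the `p`-adic valuation of `dim X`
    nullity Θ p X = ⨆ k ∈ {k : ℕ | p ^ k ∣ Θ.tr X (𝟙 X)}, (k : ℕ∞) := by
  have hspan : Ideal.span (Set.range (Θ.tr X)) = Ideal.span {Θ.tr X (𝟙 X)} := by
    rw [← LinearMap.coe_range, Ideal.span, Submodule.span_eq]
    exact (Θ.tr X).range_eq_span_singleton_of_forall_sub_smul_mem (𝟙 X) hEnd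
  have hneg (k : ℕ) : IsNegligibleObj Θ (Ideal.span {p} ^ k) X ↔ p ^ k ∣ Θ.tr X (𝟙 X) := by
    rw [isNegligibleObj_iff_span_range_le, hspan, Ideal.span_singleton_pow,
      Ideal.span_singleton_le_span_singleton]
  refine ⟨hspan, hneg, ?_⟩
  simp only [nullity, hneg]

theorem trace_ideal_of_local_end [IsDomain R] [IsDiscreteValuationRing R]
    (p : R) (hp : Irreducible p) (Θ : SphericalTraceData R C) (X : C)
    (hfree : Module.Free R (X ⟶ X)) (hfin : Module.Finite R (X ⟶ X))
    -- `End(X) = R·id_X + 𝔪·End(X)`, i.e. `End(X) ⊗ R/𝔪` is one-dimensional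
    (hEnd : ∀ a : X ⟶ X, ∃ r : R,
        a - r • 𝟙 X ∈ (IsLocalRing.maximalIdeal R • ⊤ : Submodule R (X ⟶ X))) :
    -- the ideal generated by all traces of endomorphisms of `X` is `(dim X)`
    Ideal.span (Set.range (Θ.tr X)) = Ideal.span {Θ.tr X (𝟙 X)} ∧
    -- in particular `X ∈ N_k ↔ p^k ∣ dim X`
    (∀ k : ℕ, IsNegligibleObj Θ (Ideal.span {p} ^ k) X ↔ p ^ k ∣ Θ.tr X (𝟙 X)) ∧
    -- so the nullity of `X` is the `p`-adic valuation of `dim X`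
    nullity Θ p X = ⨆ k ∈ {k : ℕ | p ^ k ∣ Θ.tr X (𝟙 X)}, (k : ℕ∞) :=
  trace_ideal_of_local_end_general p Θ X hEnd
end

section
/- Let n, ℓ, λ, x_0,…,x_{s−1} and y ∈ ℤ^n be as in the construction of the standard facet F_0(λ). Then for every i ≥ 1, the maximum of |Γ_1| + ⋯ + |Γ_i| over all collections of i pairwise disjoint y-chains Γ_1, …, Γ_i equals λ^T_1 + ⋯ + λ^T_i (with λ^T_j := 0 for j > s); that is, the chain statistic μ(y) of Shi's algorithm equals the conjugate partition λ^T. -/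
/-!
STATEMENT 8. Let `n, ℓ, λ, x_0,…,x_{s−1}` and `y ∈ ℤ^n` be as in the construction
of the standard facet `F_0(λ)`.  Then for every `i ≥ 1`, the maximum of
`|Γ_1| + ⋯ + |Γ_i|` over all collections of `i` pairwise disjoint `y`-chains
`Γ_1, …, Γ_i` equals `λ^T_1 + ⋯ + λ^T_i` (with `λ^T_j := 0` for `j > s`); that is,
the chain statistic `μ(y)` of Shi's algorithm equals the conjugate partition `λ^T`.
-/

/-- A `y`-chain: a set of indices whose `y`-values pairwise differ by at least `ℓ`. -/
def IsYChain {n : ℕ} (ℓ : ℤ) (y : Fin n → ℤ) (S : Finset (Fin n)) : Prop :=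
  ∀ a ∈ S, ∀ b ∈ S, a ≠ b → ℓ ≤ |y a - y b|

private lemma x_strict (x : ℕ → ℤ) (s : ℕ)
    (h : ∀ j, j + 1 < s → x j < x (j + 1)) :
    ∀ {j k : ℕ}, j < k → k < s → x j < x k := by
  intro j k hjk hks
  induction k with
  | zero => omega
  | succ m ih =>
    rcases Nat.lt_succ_iff_lt_or_eq.mp hjk with h' | h'
    · exact (ih h' (by omega)).trans (h m hks)
    · rw [h']; exact h m hks

private lemma count_transfer {n : ℕ} (y : Fin n → ℤ) (t : Finset (ℕ × ℕ))
    (f : ℕ × ℕ → ℤ)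
    (hy : Multiset.map y Finset.univ.val = Multiset.map f t.val)
    (q : ℤ → Prop) [DecidablePred q] :
    (Finset.univ.filter fun a => q (y a)).card = (t.filter fun c => q (f c)).card := by
  have h1 : (Finset.univ.filter fun a : Fin n => q (y a)).card
      = Multiset.countP q (Multiset.map y Finset.univ.val) := by
    rw [Multiset.countP_map, Finset.card_def, Finset.filter_val]
  have h2 : (t.filter fun c => q (f c)).card
      = Multiset.countP q (Multiset.map f t.val) := by
    rw [Multiset.countP_map, Finset.card_def, Finset.filter_val]
  rw [h1, h2, hy]

theorem chain_statistic_eq_conjugate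
    (n : ℕ) (hn : 1 ≤ n) (ℓ : ℤ) (hℓ : (n : ℤ) < ℓ)
    (μ : YoungDiagram) (hcard : μ.card = n)
    (s : ℕ) (hs : s = μ.rowLen 0)            -- `s` = number of columns of `λ`
    (x : ℕ → ℤ) (hx0 : x 0 = 0)
    (hxmono : ∀ j, j + 1 < s → x j < x (j + 1))
    (hxlt : ∀ j, j < s → x j < ℓ)
    (y : Fin n → ℤ) (hymono : StrictAnti y)   -- `y` is listed in decreasing order
    -- the coordinates of `y` are the numbers `(i−1)·ℓ + x_{j−1}`, one for each box
    -- of `λ` in (1-indexed) row `i` and column `j`: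
    (hy : Multiset.map y Finset.univ.val =
        Multiset.map (fun c : ℕ × ℕ => (c.1 : ℤ) * ℓ + x c.2) μ.cells.val)
    (i : ℕ) (hi : 1 ≤ i) :
    IsGreatest
      {m : ℕ | ∃ Γ : Fin i → Finset (Fin n),
        (∀ a b, a ≠ b → Disjoint (Γ a) (Γ b)) ∧
        (∀ a, IsYChain ℓ y (Γ a)) ∧
        m = ∑ a, (Γ a).card}
      (∑ j ∈ Finset.range i, μ.colLen j) := by
  classical
  have hℓ0 : (0:ℤ) < ℓ := lt_of_le_of_lt (by exact_mod_cast Nat.zero_le n) hℓ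
  -- basic facts about x
  have hxnn : ∀ j, j < s → 0 ≤ x j := by
    intro j hj
    rcases Nat.eq_zero_or_pos j with h | h
    · simp [h, hx0]
    · have := x_strict x s hxmono h hj
      linarith [hx0]
  have hxinj : ∀ j k, j < s → k < s → x j = x k → j = k := by
    intro j k hj hk he
    rcases lt_trichotomy j k with h | h | h
    · exact absurd he (x_strict x s hxmono h hk).ne
    · exact h
    · exact absurd he.symm (x_strict x s hxmono h hj).ne
  -- facts about cells
  have hcol_s : ∀ c ∈ μ.cells, c.2 < s := by
    intro c hc
    have h1 : c.2 < μ.rowLen c.1 := by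
      rw [← YoungDiagram.mem_iff_lt_rowLen]
      simpa using hc
    have h2 : μ.rowLen c.1 ≤ μ.rowLen 0 := μ.rowLen_anti 0 c.1 (Nat.zero_le _)
    omega
  have hrow_b : ∀ c ∈ μ.cells, c.1 < μ.colLen 0 := by
    intro c hc
    have h1 : c.1 < μ.colLen c.2 := by
      rw [← YoungDiagram.mem_iff_lt_colLen]
      simpa using hc
    have h2 : μ.colLen c.2 ≤ μ.colLen 0 := μ.colLen_anti 0 c.2 (Nat.zero_le _)
    omega
  have hdivmod : ∀ c ∈ μ.cells,
      ((c.1 : ℤ) * ℓ + x c.2) / ℓ = c.1 ∧ ((c.1 : ℤ) * ℓ + x c.2) % ℓ = x c.2 := by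
    intro c hc
    have h1 : 0 ≤ x c.2 := hxnn _ (hcol_s c hc)
    have h2 : x c.2 < ℓ := hxlt _ (hcol_s c hc)
    constructor
    · rw [add_comm, Int.add_mul_ediv_right _ _ hℓ0.ne', Int.ediv_eq_zero_of_lt h1 h2, zero_add]
    · rw [add_comm, Int.add_mul_emod_self_right, Int.emod_eq_of_lt h1 h2]
  -- every y-value comes from a cell
  have cell_of : ∀ a : Fin n, ∃ c ∈ μ.cells, y a = (c.1 : ℤ) * ℓ + x c.2 := by
    intro a
    have h1 : y a ∈ Multiset.map y Finset.univ.val :=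
      Multiset.mem_map_of_mem y (Finset.mem_univ a)
    rw [hy, Multiset.mem_map] at h1
    obtain ⟨c, hc, he⟩ := h1
    exact ⟨c, hc, he.symm⟩
  have ynn : ∀ a : Fin n, 0 ≤ y a := by
    intro a
    obtain ⟨c, hc, he⟩ := cell_of a
    have h1 : (0:ℤ) ≤ (c.1 : ℤ) * ℓ := mul_nonneg (by positivity) hℓ0.le
    have h2 := hxnn _ (hcol_s c hc)
    rw [he]
    linarith
  have ydiv : ∀ a : Fin n, ∃ c ∈ μ.cells, y a / ℓ = c.1 ∧ y a % ℓ = x c.2 := by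
    intro a
    obtain ⟨c, hc, he⟩ := cell_of a
    obtain ⟨h1, h2⟩ := hdivmod c hc
    exact ⟨c, hc, by rw [he, h1], by rw [he, h2]⟩
  -- two elements with the same row are close
  have same_row : ∀ a b : Fin n, y a / ℓ = y b / ℓ → |y a - y b| < ℓ := by
    intro a b h
    have ha := Int.mul_ediv_add_emod (y a) ℓ
    have hb := Int.mul_ediv_add_emod (y b) ℓ
    rw [h] at ha
    have h1 : 0 ≤ y a % ℓ := Int.emod_nonneg _ hℓ0.ne'
    have h2 : y a % ℓ < ℓ := Int.emod_lt_of_pos _ hℓ0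
    have h3 : 0 ≤ y b % ℓ := Int.emod_nonneg _ hℓ0.ne'
    have h4 : y b % ℓ < ℓ := Int.emod_lt_of_pos _ hℓ0
    rw [abs_lt]
    constructor <;> linarith
  -- counting rows and columns
  have row_count : ∀ r : ℕ,
      (Finset.univ.filter fun a : Fin n => y a / ℓ = (r : ℤ)).card = μ.rowLen r := by
    intro r
    refine (count_transfer y μ.cells _ hy (fun v => v / ℓ = (r : ℤ))).trans ?_
    rw [μ.rowLen_eq_card]
    have : (μ.cells.filter fun c => ((c.1 : ℤ) * ℓ + x c.2) / ℓ = (r : ℤ)) = μ.row r := by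
      unfold YoungDiagram.row
      apply Finset.filter_congr
      intro c hc
      rw [(hdivmod c hc).1]
      exact_mod_cast Iff.rfl
    rw [this]
  have col_count : ∀ j : ℕ, j < s →
      (Finset.univ.filter fun a : Fin n => y a % ℓ = x j).card = μ.colLen j := by
    intro j hj
    refine (count_transfer y μ.cells _ hy (fun v => v % ℓ = x j)).trans ?_
    rw [μ.colLen_eq_card]
    have : (μ.cells.filter fun c => ((c.1 : ℤ) * ℓ + x c.2) % ℓ = x j) = μ.col j := by
      unfold YoungDiagram.col
      apply Finset.filter_congr
      intro c hc
      rw [(hdivmod c hc).2]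
      constructor
      · intro he; exact hxinj _ _ (hcol_s c hc) hj he
      · intro he; rw [he]
    rw [this]
  have colLen_zero : ∀ j, s ≤ j → μ.colLen j = 0 := by
    intro j hj
    by_contra h
    have h1 : (0, j) ∈ μ := YoungDiagram.mem_iff_lt_colLen.mpr (Nat.pos_of_ne_zero h)
    rw [YoungDiagram.mem_iff_lt_rowLen] at h1
    omega
  -- the combinatorial identity
  have hrc : ∀ r j : ℕ, j < μ.rowLen r ↔ r < μ.colLen j := by
    intro r j
    rw [← YoungDiagram.mem_iff_lt_rowLen, YoungDiagram.mem_iff_lt_colLen]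
  have identity : ∑ r ∈ Finset.range (μ.colLen 0), min i (μ.rowLen r)
      = ∑ j ∈ Finset.range i, μ.colLen j := by
    have step1 : ∀ r : ℕ, min i (μ.rowLen r)
        = ((Finset.range i).filter fun j => j < μ.rowLen r).card := by
      intro r
      have h : (Finset.range i).filter (fun j => j < μ.rowLen r)
          = Finset.range (min i (μ.rowLen r)) := by
        ext j
        simp only [Finset.mem_filter, Finset.mem_range, lt_min_iff]
      rw [h, Finset.card_range]
    calc ∑ r ∈ Finset.range (μ.colLen 0), min i (μ.rowLen r)
        = ∑ r ∈ Finset.range (μ.colLen 0), ∑ j ∈ Finset.range i,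
            (if j < μ.rowLen r then 1 else 0) := by
          refine Finset.sum_congr rfl fun r _ => ?_
          rw [step1, Finset.card_filter]
      _ = ∑ j ∈ Finset.range i, ∑ r ∈ Finset.range (μ.colLen 0),
            (if j < μ.rowLen r then 1 else 0) := Finset.sum_comm
      _ = ∑ j ∈ Finset.range i, μ.colLen j := by
          refine Finset.sum_congr rfl fun j _ => ?_
          rw [← Finset.card_filter]
          have h : (Finset.range (μ.colLen 0)).filter (fun r => j < μ.rowLen r)
              = Finset.range (μ.colLen j) := by
            ext r
            simp only [Finset.mem_filter, Finset.mem_range, hrc]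
            have := μ.colLen_anti 0 j (Nat.zero_le _)
            omega
          rw [h, Finset.card_range]
  constructor
  · -- membership: the column chains achieve the value
    refine ⟨fun j => if (j : ℕ) < s then
        Finset.univ.filter (fun a : Fin n => y a % ℓ = x (j : ℕ)) else ∅, ?_, ?_, ?_⟩
    · intro a b hab
      dsimp only
      split_ifs with h1 h2 h2
      · rw [Finset.disjoint_left]
        intro c hc hc'
        simp only [Finset.mem_filter] at hc hc'
        exact hab (Fin.ext (hxinj _ _ h1 h2 (hc.2.symm.trans hc'.2)))
      all_goals simp
    · intro j
      dsimp only
      split_ifs with h1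
      · intro a ha b hb hab
        simp only [Finset.mem_filter] at ha hb
        have hne : y a ≠ y b := fun h => hab (hymono.injective h)
        have hd : (y a - y b) % ℓ = 0 := by
          rw [Int.sub_emod, ha.2, hb.2, sub_self, Int.zero_emod]
        have hdvd : ℓ ∣ y a - y b := Int.dvd_of_emod_eq_zero hd
        have hne0 : y a - y b ≠ 0 := sub_ne_zero.mpr hne
        exact Int.le_of_dvd (abs_pos.mpr hne0) ((dvd_abs _ _).mpr hdvd)
      · intro a ha
        simp at ha
    · have hcards : ∀ j : ℕ,
          ((if j < s then Finset.univ.filter (fun a : Fin n => y a % ℓ = x j)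
            else ∅ : Finset (Fin n))).card = μ.colLen j := by
        intro j
        by_cases h1 : j < s
        · rw [if_pos h1, col_count j h1]
        · rw [if_neg h1, Finset.card_empty, colLen_zero j (le_of_not_gt h1)]
      refine Eq.trans ?_ (Fin.sum_univ_eq_sum_range
        (fun j => ((if j < s then Finset.univ.filter (fun a : Fin n => y a % ℓ = x j)
            else ∅ : Finset (Fin n))).card) i).symm
      exact Finset.sum_congr rfl fun j _ => (hcards j).symm
  · -- upper bound
    rintro m ⟨Γ, hdisj, hchain, rfl⟩
    have hbU : ∑ a, (Γ a).card = (Finset.univ.biUnion Γ).card := by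
      rw [Finset.card_biUnion]
      intro a _ b _ hab
      exact hdisj a b hab
    rw [hbU]
    set T := Finset.univ.biUnion Γ with hT
    have hmem : ∀ a ∈ T, (y a / ℓ).toNat ∈ Finset.range (μ.colLen 0) := by
      intro a _
      obtain ⟨c, hc, h1, _⟩ := ydiv a
      rw [Finset.mem_range, h1]
      simpa using hrow_b c hc
    rw [Finset.card_eq_sum_card_fiberwise hmem]
    refine le_trans (Finset.sum_le_sum ?_) identity.le
    intro r _
    rw [le_min_iff]
    constructor
    · -- at most i elements per row
      have hsub : T.filter (fun a => (y a / ℓ).toNat = r)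
          ⊆ Finset.univ.biUnion (fun b : Fin i =>
              (Γ b).filter (fun a => (y a / ℓ).toNat = r)) := by
        intro a ha
        rw [Finset.mem_filter] at ha
        obtain ⟨haT, h2⟩ := ha
        rw [hT, Finset.mem_biUnion] at haT
        obtain ⟨b, _, hb⟩ := haT
        rw [Finset.mem_biUnion]
        exact ⟨b, Finset.mem_univ b, Finset.mem_filter.mpr ⟨hb, h2⟩⟩
      refine le_trans (Finset.card_le_card hsub) ?_
      refine le_trans Finset.card_biUnion_le ?_
      have hone : ∀ b : Fin i, ((Γ b).filter (fun a => (y a / ℓ).toNat = r)).card ≤ 1 := by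
        intro b
        rw [Finset.card_le_one]
        intro a ha a' ha'
        simp only [Finset.mem_filter] at ha ha'
        by_contra hne
        have hdvne : y a / ℓ = y a' / ℓ := by
          have h1 : 0 ≤ y a / ℓ := Int.ediv_nonneg (ynn a) hℓ0.le
          have h2 : 0 ≤ y a' / ℓ := Int.ediv_nonneg (ynn a') hℓ0.le
          have e1 := ha.2
          have e2 := ha'.2
          omega
        have hlt := same_row a a' hdvne
        have hge := hchain b a ha.1 a' ha'.1 hne
        omega
      calc ∑ b : Fin i, ((Γ b).filter (fun a => (y a / ℓ).toNat = r)).card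
          ≤ ∑ _b : Fin i, 1 := Finset.sum_le_sum fun b _ => hone b
        _ = i := by simp
    · -- at most rowLen r elements per row
      have hsub : T.filter (fun a => (y a / ℓ).toNat = r)
          ⊆ Finset.univ.filter (fun a : Fin n => y a / ℓ = (r : ℤ)) := by
        intro a ha
        simp only [Finset.mem_filter] at ha ⊢
        have h1 : 0 ≤ y a / ℓ := Int.ediv_nonneg (ynn a) hℓ0.le
        refine ⟨Finset.mem_univ a, ?_⟩
        omega
      exact le_trans (Finset.card_le_card hsub) (row_count r).le
end

section
/- Let ℓ > 0 be a real number, n ≥ 1, and y ∈ ℝ^n with y_a ≥ 0 for all a. For m ∈ ℕ set I(m) := #{a : m·ℓ ≤ y_a < (m+1)·ℓ}. Then for any i ≥ 1 and any pairwise disjoint y-chains Γ_1, …, Γ_i one has |Γ_1| + ⋯ + |Γ_i| ≤ Σ_{m ≥ 0} min(i, I(m)). -/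
/-!
STATEMENT 9. Let `ℓ > 0` be a real number, `n ≥ 1`, and `y ∈ ℝ^n` with `y_a ≥ 0`
for all `a`.  For `m ∈ ℕ` set `I(m) := #{a : m·ℓ ≤ y_a < (m+1)·ℓ}`.  Then for any
`i ≥ 1` and any pairwise disjoint `y`-chains `Γ_1, …, Γ_i` one has
`|Γ_1| + ⋯ + |Γ_i| ≤ Σ_{m ≥ 0} min(i, I(m))`.
(The sum over `m ≥ 0` has finite support: `I(m) = 0` once `m·ℓ` exceeds all the
`y_a`, so it is expressed as a sum over `m < M` for any bound `M` with
`y_a < M·ℓ` for all `a`.)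
-/

/-- A `y`-chain: a set of indices whose `y`-values pairwise differ by at least `ℓ`. -/
def IsYChainR {n : ℕ} (ℓ : ℝ) (y : Fin n → ℝ) (S : Finset (Fin n)) : Prop :=
  ∀ a ∈ S, ∀ b ∈ S, a ≠ b → ℓ ≤ |y a - y b|

/-!
Sort the indices into the buckets `[m ℓ, (m + 1) ℓ)` via `a ↦ ⌊y_a / ℓ⌋₊`. Two points of one
bucket are less than `ℓ` apart, so a `y`-chain meets each bucket at most once; hence the `i`
chains contribute at most `i` elements to bucket `m`, and, being disjoint, at most `I(m)`.
Summing over the buckets gives the bound.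
-/

open Finset Function

namespace Finset

variable {ι α β : Type*}

lemma card_filter_eq_le_one_of_injOn [DecidableEq β] {s : Finset α} {f : α → β}
    (hf : Set.InjOn f s) (m : β) : #{a ∈ s | f a = m} ≤ 1 := by
  refine card_le_one.2 fun a ha b hb => ?_
  rw [mem_filter] at ha hb
  exact hf ha.1 hb.1 (ha.2.trans hb.2.symm)

lemma sum_card_le_card_of_pairwise_disjoint [Fintype ι] [DecidableEq α] {s : Finset α}
    {Γ : ι → Finset α} (hdisj : Pairwise (Disjoint on Γ)) (hs : ∀ j, Γ j ⊆ s) :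
    ∑ j, #(Γ j) ≤ #s := by
  rw [← card_biUnion fun j _ k _ hjk => hdisj hjk]
  exact card_le_card (biUnion_subset.2 fun j _ => hs j)

theorem sum_card_le_sum_min_card_fiber [Fintype ι] [DecidableEq α] [DecidableEq β]
    {s : Finset α} {t : Finset β} {f : α → β} {Γ : ι → Finset α}
    (hdisj : Pairwise (Disjoint on Γ)) (hs : ∀ j, Γ j ⊆ s)
    (hinj : ∀ j, Set.InjOn f (Γ j)) (hst : Set.MapsTo f s t) :
    ∑ j, #(Γ j) ≤ ∑ m ∈ t, min (Fintype.card ι) #{a ∈ s | f a = m} := by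
  calc ∑ j, #(Γ j) = ∑ j, ∑ m ∈ t, #{a ∈ Γ j | f a = m} :=
        sum_congr rfl fun j _ => card_eq_sum_card_fiberwise fun a ha => hst (hs j ha)
    _ = ∑ m ∈ t, ∑ j, #{a ∈ Γ j | f a = m} := sum_comm
    _ ≤ ∑ m ∈ t, min (Fintype.card ι) #{a ∈ s | f a = m} := by
      gcongr with m
      refine le_min ?_ ?_
      · calc ∑ j, #{a ∈ Γ j | f a = m} ≤ ∑ _j : ι, 1 :=
              sum_le_sum fun j _ => card_filter_eq_le_one_of_injOn (hinj j) m
          _ = Fintype.card ι := by simp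
      · exact sum_card_le_card_of_pairwise_disjoint
          (fun j k hjk => (hdisj hjk).mono (filter_subset _ _) (filter_subset _ _))
          fun j => filter_subset_filter _ (hs j)

end Finset

lemma Nat.floor_div_eq_iff {K : Type*} [Field K] [LinearOrder K] [IsStrictOrderedRing K]
    [FloorSemiring K] {x ℓ : K} (hℓ : 0 < ℓ) (hx : 0 ≤ x) {m : ℕ} :
    ⌊x / ℓ⌋₊ = m ↔ m * ℓ ≤ x ∧ x < (m + 1) * ℓ := by
  rw [Nat.floor_eq_iff (div_nonneg hx hℓ.le), le_div_iff₀ hℓ, div_lt_iff₀ hℓ]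

lemma IsYChainR.injOn_floor_div {n : ℕ} {ℓ : ℝ} {y : Fin n → ℝ} {S : Finset (Fin n)}
    (hS : IsYChainR ℓ y S) (hℓ : 0 < ℓ) (hy : ∀ a, 0 ≤ y a) :
    Set.InjOn (fun a => ⌊y a / ℓ⌋₊) S := by
  intro a ha b hb hab
  by_contra hne
  obtain ⟨ha₁, ha₂⟩ := (Nat.floor_div_eq_iff hℓ (hy a)).1 rfl
  obtain ⟨hb₁, hb₂⟩ := (Nat.floor_div_eq_iff hℓ (hy b)).1 hab.symm
  have hclose : |y a - y b| < ℓ := abs_sub_lt_iff.2 ⟨by linarith, by linarith⟩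
  exact (hS a ha b hb hne).not_gt hclose

theorem disjoint_chains_card_le_general
    (n : ℕ) (ℓ : ℝ) (hℓ : 0 < ℓ)
    (y : Fin n → ℝ) (hy : ∀ a, 0 ≤ y a)
    (i : ℕ)
    (Γ : Fin i → Finset (Fin n))
    (hdisj : ∀ a b, a ≠ b → Disjoint (Γ a) (Γ b))
    (hchain : ∀ a, IsYChainR ℓ y (Γ a))
    (M : ℕ) (hM : ∀ a, y a < (M : ℝ) * ℓ) :
    ∑ a, (Γ a).card ≤
      ∑ m ∈ Finset.range M,
        min i (Finset.univ.filter
          (fun a : Fin n => (m : ℝ) * ℓ ≤ y a ∧ y a < ((m : ℝ) + 1) * ℓ)).card := by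
  have hbucket : ∀ m : ℕ,
      univ.filter (fun a : Fin n => (m : ℝ) * ℓ ≤ y a ∧ y a < ((m : ℝ) + 1) * ℓ) =
        univ.filter (fun a => ⌊y a / ℓ⌋₊ = m) := fun m =>
    filter_congr fun a _ => (Nat.floor_div_eq_iff hℓ (hy a)).symm
  have hrange : Set.MapsTo (fun a => ⌊y a / ℓ⌋₊) (univ : Finset (Fin n)) (range M) :=
    fun a _ => mem_range.2 <|
      (Nat.floor_lt (div_nonneg (hy a) hℓ.le)).2 ((div_lt_iff₀ hℓ).2 (hM a))
  simpa only [hbucket, Fintype.card_fin] using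
    sum_card_le_sum_min_card_fiber (fun j k => hdisj j k) (fun j => subset_univ _)
      (fun j => (hchain j).injOn_floor_div hℓ hy) hrange

theorem disjoint_chains_card_le
    (n : ℕ) (hn : 1 ≤ n) (ℓ : ℝ) (hℓ : 0 < ℓ)
    (y : Fin n → ℝ) (hy : ∀ a, 0 ≤ y a)
    (i : ℕ) (hi : 1 ≤ i)
    (Γ : Fin i → Finset (Fin n))
    (hdisj : ∀ a b, a ≠ b → Disjoint (Γ a) (Γ b))
    (hchain : ∀ a, IsYChainR ℓ y (Γ a))
    (M : ℕ) (hM : ∀ a, y a < (M : ℝ) * ℓ) :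
    ∑ a, (Γ a).card ≤
      ∑ m ∈ Finset.range M,
        min i (Finset.univ.filter
          (fun a : Fin n => (m : ℝ) * ℓ ≤ y a ∧ y a < ((m : ℝ) + 1) * ℓ)).card :=
  disjoint_chains_card_le_general n ℓ hℓ y hy i Γ hdisj hchain M hM
end

section
/- Fix integers n ≥ 1 and ℓ > n and a partition λ of n, and let y ∈ ℤ^n list in strictly decreasing order the numbers (i−1)·ℓ + (j−1), one for each box of λ in row i and column j. Then every strictly decreasing tuple ỹ ∈ ℤ^n of nonnegative integers such that, for each residue class r mod ℓ, ỹ and y have the same number of coordinates congruent to r, satisfies ỹ_a ≥ y_a for all a. In particular Σ_a ỹ_a ≥ Σ_a y_a, with equality if and only if ỹ = y. -/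
/-!
Both tuples are strictly decreasing, so `y ≤ z` pointwise as soon as, for every threshold `v`,
fewer coordinates of `z` than of `y` lie below `v`. Count residue class by residue class: since
`ℓ > n` exceeds every column index, the coordinates of `y` congruent to `r` are exactly
`r, r + ℓ, …, r + (k - 1)ℓ` with `k` the length of column `r`, and these are the `k` smallest
nonnegative integers of that class; `z` has the same number `k` of coordinates in the class, all
distinct and nonnegative, so no more of them can lie below `v`.
-/

open Finset Function

namespace YoungDiagram

theorem snd_lt_card (μ : YoungDiagram) {c : ℕ × ℕ} (hc : c ∈ μ) : c.2 < μ.card :=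
  calc c.2 < μ.rowLen c.1 := mem_iff_lt_rowLen.mp hc
    _ = #(μ.row c.1) := μ.rowLen_eq_card
    _ ≤ μ.card := card_filter_le _ _

theorem card_filter_col (μ : YoungDiagram) (j : ℕ) (p : ℕ → Prop) [DecidablePred p] :
    #{c ∈ μ.col j | p c.1} = #{i ∈ range (μ.colLen j) | p i} := by
  rw [col_eq_prod, product_singleton, filter_map, card_map]
  rfl

end YoungDiagram

theorem Finset.card_filter_eq_of_map_eq {ι κ β : Type*} [Fintype ι] {y : ι → β} {s : Finset κ}
    {f : κ → β} (h : univ.val.map y = s.val.map f) (p : β → Prop) [DecidablePred p] :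
    #{a | p (y a)} = #{c ∈ s | p (f c)} := by
  have := congrArg (Multiset.countP p) h
  rwa [Multiset.countP_map, Multiset.countP_map] at this

theorem card_le_card_filter_range_of_antitone {P : ℕ → Prop} [DecidablePred P] (hP : Antitone P)
    {Q : Finset ℕ} (hQ : ∀ q ∈ Q, P q) {N : ℕ} (hN : #Q ≤ N) :
    #Q ≤ #{i ∈ range N | P i} := by
  by_cases hQN : Q ⊆ range N
  · exact card_le_card fun q hq => mem_filter.mpr ⟨hQN hq, hQ q hq⟩
  · obtain ⟨q, hq, hqN⟩ := not_subset.mp hQN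
    have hall : ∀ i ∈ range N, P i := fun i hi =>
      hP (mem_range.mp hi |>.le.trans (not_lt.mp (mem_range.not.mp hqN))) (hQ q hq)
    rwa [filter_true_of_mem hall, card_range]

theorem StrictAnti.le_of_forall_card_filter_lt_le {ι α : Type*} [Fintype ι] [LinearOrder ι]
    [LocallyFiniteOrderTop ι] [LinearOrder α] {y z : ι → α} (hy : StrictAnti y)
    (hz : Antitone z) (h : ∀ v, #{a | z a < v} ≤ #{a | y a < v}) (a : ι) : y a ≤ z a := by
  by_contra! hlt
  have hIci : Ici a ⊆ ({b | z b < y a} : Finset ι) := fun b hb =>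
    mem_filter.mpr ⟨mem_univ b, (hz (mem_Ici.mp hb)).trans_lt hlt⟩
  have hIoi : ({b | y b < y a} : Finset ι) ⊆ Ioi a := fun b hb =>
    mem_Ioi.mpr (hy.lt_iff_gt.mp (mem_filter.mp hb).2)
  have := (card_le_card hIci).trans ((h (y a)).trans (card_le_card hIoi))
  rw [Ici_eq_cons_Ioi, card_cons] at this
  omega

theorem card_filter_lt_emod_le {ι : Type*} [Fintype ι] {ℓ : ℤ} (hℓ : 0 < ℓ) {z : ι → ℤ}
    (hz : Injective z) (hz₀ : ∀ a, 0 ≤ z a) (r v : ℤ) :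
    #{a | z a < v ∧ z a % ℓ = r} ≤
      #{i ∈ range (#{a | z a % ℓ = r}) | ((i : ℕ) : ℤ) * ℓ + r < v} := by
  set s : Finset ι := {a | z a < v ∧ z a % ℓ = r}
  have hdiv : ∀ a ∈ s, ((z a / ℓ).toNat : ℤ) * ℓ + r = z a := fun a ha => by
    rw [Int.toNat_of_nonneg (Int.ediv_nonneg (hz₀ a) hℓ.le), ← (mem_filter.mp ha).2.2,
      Int.ediv_mul_add_emod]
  have hinj : Set.InjOn (fun a => (z a / ℓ).toNat) s := fun a ha b hb hab =>
    hz <| by rw [← hdiv a ha, ← hdiv b hb, show (z a / ℓ).toNat = (z b / ℓ).toNat from hab]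
  rw [← card_image_of_injOn hinj]
  refine card_le_card_filter_range_of_antitone (fun i j hij hj => ?_) ?_ ?_
  · have : (i : ℤ) * ℓ ≤ j * ℓ := mul_le_mul_of_nonneg_right (by exact_mod_cast hij) hℓ.le
    change (i : ℤ) * ℓ + r < v
    linarith
  · simp only [mem_image]
    rintro _ ⟨a, ha, rfl⟩
    rw [hdiv a ha]
    exact (mem_filter.mp ha).2.1
  · rw [card_image_of_injOn hinj]
    exact card_le_card (monotone_filter_right _ fun _ _ h => h.2)

theorem card_filter_emod_eq_card_filter_range {ι : Type*} [Fintype ι] {ℓ : ℤ} {μ : YoungDiagram}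
    (hμ : ∀ c ∈ μ, (c.2 : ℤ) < ℓ) {y : ι → ℤ}
    (hy : univ.val.map y = μ.cells.val.map fun c : ℕ × ℕ => (c.1 : ℤ) * ℓ + c.2)
    {r : ℤ} (hr : 0 ≤ r) (q : ℤ → Prop) [DecidablePred q] :
    #{a | q (y a) ∧ y a % ℓ = r} = #{i ∈ range (μ.colLen r.toNat) | q ((i : ℕ) * ℓ + r)} := by
  rw [card_filter_eq_of_map_eq hy fun x => q x ∧ x % ℓ = r, ← μ.card_filter_col, YoungDiagram.col,
    filter_filter]
  refine congrArg card (filter_congr fun c hc => ?_)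
  have hmod : ((c.1 : ℤ) * ℓ + c.2) % ℓ = c.2 := by
    rw [add_comm, Int.add_mul_emod_self_right, Int.emod_eq_of_lt (by positivity) (hμ c hc)]
  rw [hmod]
  constructor
  · rintro ⟨hq, rfl⟩
    simpa using hq
  · rintro ⟨hc2, hq⟩
    rw [hc2, Int.toNat_of_nonneg hr]
    exact ⟨hq, rfl⟩

theorem card_filter_lt_le_of_emod_card_eq {ι : Type*} [Fintype ι] {ℓ : ℤ} (hℓ : 0 < ℓ)
    {μ : YoungDiagram} (hμ : ∀ c ∈ μ, (c.2 : ℤ) < ℓ) {y : ι → ℤ}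
    (hy : univ.val.map y = μ.cells.val.map fun c : ℕ × ℕ => (c.1 : ℤ) * ℓ + c.2)
    {z : ι → ℤ} (hz : Injective z) (hz₀ : ∀ a, 0 ≤ z a)
    (hres : ∀ r, #{a | z a % ℓ = r} = #{a | y a % ℓ = r}) (v : ℤ) :
    #{a | z a < v} ≤ #{a | y a < v} := by
  have hmem (x : ℤ) : x % ℓ ∈ Ico 0 ℓ :=
    mem_Ico.mpr ⟨Int.emod_nonneg _ hℓ.ne', Int.emod_lt_of_pos _ hℓ⟩
  rw [card_eq_sum_card_fiberwise fun a _ => hmem (z a),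
    card_eq_sum_card_fiberwise fun a _ => hmem (y a)]
  refine sum_le_sum fun r hr => ?_
  have hr₀ := (mem_Ico.mp hr).1
  have hcol : #{a | y a % ℓ = r} = μ.colLen r.toNat := by
    simpa using card_filter_emod_eq_card_filter_range hμ hy hr₀ fun _ => True
  simp only [filter_filter]
  calc #{a | z a < v ∧ z a % ℓ = r}
      ≤ #{i ∈ range (#{a | z a % ℓ = r}) | ((i : ℕ) : ℤ) * ℓ + r < v} :=
        card_filter_lt_emod_le hℓ hz hz₀ r v
    _ = #{a | y a < v ∧ y a % ℓ = r} := by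
      rw [hres, hcol, card_filter_emod_eq_card_filter_range hμ hy hr₀ (· < v)]

theorem standard_facet_minimal_general
    (n : ℕ) (ℓ : ℤ) (hℓ : (n : ℤ) < ℓ)
    (μ : YoungDiagram) (hcard : μ.card = n)
    (y : Fin n → ℤ) (hymono : StrictAnti y)
    (hy : Multiset.map y Finset.univ.val =
        Multiset.map (fun c : ℕ × ℕ => (c.1 : ℤ) * ℓ + (c.2 : ℤ)) μ.cells.val)
    (z : Fin n → ℤ) (hzmono : StrictAnti z) (hznn : ∀ a, 0 ≤ z a)
    (hres : ∀ r : ℤ,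
        (Finset.univ.filter (fun a : Fin n => z a % ℓ = r)).card =
        (Finset.univ.filter (fun a : Fin n => y a % ℓ = r)).card) :
    (∀ a, y a ≤ z a) ∧
    (∑ a, y a ≤ ∑ a, z a) ∧
    ((∑ a, z a = ∑ a, y a) ↔ z = y) := by
  have hℓ₀ : 0 < ℓ := by omega
  have hμ : ∀ c ∈ μ, (c.2 : ℤ) < ℓ := fun c hc => by
    have := μ.snd_lt_card hc
    omega
  have hle : ∀ a, y a ≤ z a := hymono.le_of_forall_card_filter_lt_le hzmono.antitone
    (card_filter_lt_le_of_emod_card_eq hℓ₀ hμ hy hzmono.injective hznn hres)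
  refine ⟨hle, sum_le_sum fun a _ => hle a, fun hsum => funext fun a => ?_, fun h => h ▸ rfl⟩
  exact ((sum_eq_sum_iff_of_le fun b _ => hle b).mp hsum.symm a (mem_univ a)).symm

theorem standard_facet_minimal
    (n : ℕ) (hn : 1 ≤ n) (ℓ : ℤ) (hℓ : (n : ℤ) < ℓ)
    (μ : YoungDiagram) (hcard : μ.card = n)
    (y : Fin n → ℤ) (hymono : StrictAnti y)
    (hy : Multiset.map y Finset.univ.val =
        Multiset.map (fun c : ℕ × ℕ => (c.1 : ℤ) * ℓ + (c.2 : ℤ)) μ.cells.val)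
    (z : Fin n → ℤ) (hzmono : StrictAnti z) (hznn : ∀ a, 0 ≤ z a)
    (hres : ∀ r : ℤ,
        (Finset.univ.filter (fun a : Fin n => z a % ℓ = r)).card =
        (Finset.univ.filter (fun a : Fin n => y a % ℓ = r)).card) :
    (∀ a, y a ≤ z a) ∧
    (∑ a, y a ≤ ∑ a, z a) ∧
    ((∑ a, z a = ∑ a, y a) ↔ z = y) :=
  standard_facet_minimal_general n ℓ hℓ μ hcard y hymono hy z hzmono hznn hres
end

section
/- Let R be a commutative local ring and C the mod-𝔪 evaluation of C_R, where all Hom-spaces of C_R are finitely generated free R-modules. If X is a retract of Y in C — i.e. there exist ᾱ ∈ Hom_C(X,Y) and β̄ ∈ Hom_C(Y,X) with β̄∘ᾱ = id_X — then X is a retract of Y in C_R. Consequently, for every thick ideal I of C_R, the same class of objects is a thick ideal of the evaluation category C. -/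
/-!
A retraction in `C` lifts to `α : X ⟶ Y`, `β : Y ⟶ X` with `e := α ≫ β ≡ 𝟙 X (mod 𝔪)`. Then
left composition with `e` is congruent to the identity on the finite `R`-module `End X`, hence
surjective by Nakayama's lemma. A preimage `w` of `𝟙 X` is a right inverse of `e`, so `β ≫ w`
retracts `α` on the nose. Thick ideals are closed under such retracts, hence under retracts in `C`.
-/

open CategoryTheory MonoidalCategory

variable {R : Type*} [CommRing R] {C : Type*} [Category C] [MonoidalCategory C]
  [Preadditive C] [Linear R C]

theorem LinearMap.surjective_of_sub_self_mem_maximalIdeal_smul_top {R M : Type*} [CommRing R]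
    [IsLocalRing R] [AddCommGroup M] [Module R M] [Module.Finite R M] (f : M →ₗ[R] M)
    (hf : ∀ y, f y - y ∈ (IsLocalRing.maximalIdeal R • ⊤ : Submodule R M)) :
    Function.Surjective f := by
  refine f.surjective_of_surjective_comp_mkQ _ (IsLocalRing.maximalIdeal_le_jacobson ⊥) ?_
  have hcomp : (IsLocalRing.maximalIdeal R • ⊤ : Submodule R M).mkQ ∘ₗ f = Submodule.mkQ _ := by
    ext y
    exact (Submodule.Quotient.eq _).mpr (hf y)
  rw [hcomp]
  exact Submodule.mkQ_surjective _

section Linear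

variable {R : Type*} [CommRing R] [IsLocalRing R] {C : Type*} [Category C] [Preadditive C]
  [Linear R C]

theorem CategoryTheory.exists_comp_eq_id_of_sub_id_mem_maximalIdeal_smul_top {X : C}
    [Module.Finite R (X ⟶ X)] (e : X ⟶ X)
    (he : e - 𝟙 X ∈ (IsLocalRing.maximalIdeal R • ⊤ : Submodule R (X ⟶ X))) :
    ∃ w : X ⟶ X, e ≫ w = 𝟙 X := by
  refine (Linear.leftComp R X e).surjective_of_sub_self_mem_maximalIdeal_smul_top
    (fun y => ?_) (𝟙 X)
  have hy : e ≫ y - y = Linear.rightComp R X y (e - 𝟙 X) := by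
    simp [Preadditive.sub_comp]
  rw [Linear.leftComp_apply, hy]
  exact Submodule.smul_top_le_comap_smul_top _ _ he

theorem CategoryTheory.exists_comp_eq_id_of_comp_sub_id_mem_maximalIdeal_smul_top {X Y : C}
    [Module.Finite R (X ⟶ X)] (α : X ⟶ Y) (β : Y ⟶ X)
    (h : α ≫ β - 𝟙 X ∈ (IsLocalRing.maximalIdeal R • ⊤ : Submodule R (X ⟶ X))) :
    ∃ β' : Y ⟶ X, α ≫ β' = 𝟙 X := by
  obtain ⟨w, hw⟩ := exists_comp_eq_id_of_sub_id_mem_maximalIdeal_smul_top (α ≫ β) h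
  exact ⟨β ≫ w, by rw [← Category.assoc, hw]⟩

end Linear

theorem retract_lifts_and_thick_ideals_descend_general
    [IsLocalRing R]
    (hfin : ∀ X Y : C, Module.Finite R (X ⟶ Y)) :
    -- a retract in the evaluation category `C` lifts to a retract in `C_R`
    (∀ (X Y : C) (α : X ⟶ Y) (β : Y ⟶ X),
        α ≫ β - 𝟙 X ∈ (IsLocalRing.maximalIdeal R • ⊤ : Submodule R (X ⟶ X)) →
          ∃ (α' : X ⟶ Y) (β' : Y ⟶ X), α' ≫ β' = 𝟙 X) ∧
    -- consequently every thick ideal of `C_R` is also a thick ideal of `C`: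
    -- it is closed under retracts taken in `C`
    (∀ I : Set C, IsThickIdeal I →
        ∀ (X Y : C), Y ∈ I →
          (∃ (α : X ⟶ Y) (β : Y ⟶ X),
              α ≫ β - 𝟙 X ∈ (IsLocalRing.maximalIdeal R • ⊤ : Submodule R (X ⟶ X))) →
            X ∈ I) := by
  refine ⟨fun X Y α β h => ?_, fun I hI X Y hY ⟨α, β, h⟩ => ?_⟩ <;> have := hfin X X
  · obtain ⟨β', hβ'⟩ := exists_comp_eq_id_of_comp_sub_id_mem_maximalIdeal_smul_top α β h
    exact ⟨α, β', hβ'⟩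
  · obtain ⟨β', hβ'⟩ := exists_comp_eq_id_of_comp_sub_id_mem_maximalIdeal_smul_top α β h
    exact hI.retract hY α β' hβ'

theorem retract_lifts_and_thick_ideals_descend
    [IsLocalRing R]
    (hfree : ∀ X Y : C, Module.Free R (X ⟶ Y))
    (hfin : ∀ X Y : C, Module.Finite R (X ⟶ Y)) :
    -- a retract in the evaluation category `C` lifts to a retract in `C_R`
    (∀ (X Y : C) (α : X ⟶ Y) (β : Y ⟶ X),
        α ≫ β - 𝟙 X ∈ (IsLocalRing.maximalIdeal R • ⊤ : Submodule R (X ⟶ X)) →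
          ∃ (α' : X ⟶ Y) (β' : Y ⟶ X), α' ≫ β' = 𝟙 X) ∧
    -- consequently every thick ideal of `C_R` is also a thick ideal of `C`:
    -- it is closed under retracts taken in `C`
    (∀ I : Set C, IsThickIdeal I →
        ∀ (X Y : C), Y ∈ I →
          (∃ (α : X ⟶ Y) (β : Y ⟶ X),
              α ≫ β - 𝟙 X ∈ (IsLocalRing.maximalIdeal R • ⊤ : Submodule R (X ⟶ X))) →
            X ∈ I) :=
  retract_lifts_and_thick_ideals_descend_general hfin
end

section
/- Let ℓ ≥ 1 be an integer, n ≥ 1, and y ∈ ℤ^n with y_1 > y_2 > ⋯ > y_n. Construct a filling of boxes as follows: place the number 1 in position (1,1); having placed 1, …, i, place i+1 at the bottom of the leftmost column whose current bottom entry r satisfies y_r − y_{i+1} ≥ ℓ, and at the top of a new column to the right of all existing columns if no such column exists. Then the resulting filling is a standard Young tableau: the column lengths are weakly decreasing from left to right (so the occupied boxes form a Young diagram), and the entries increase strictly along each row and down each column. -/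
/-!
STATEMENT 17. Let `ℓ ≥ 1` be an integer, `n ≥ 1`, and `y ∈ ℤ^n` with
`y_1 > y_2 > ⋯ > y_n`.  Construct a filling of boxes as follows: place the number
`1` in position `(1,1)`; having placed `1, …, i`, place `i+1` at the bottom of the
leftmost column whose current bottom entry `r` satisfies `y_r − y_{i+1} ≥ ℓ`, and
at the top of a new column to the right of all existing columns if no such column
exists.  Then the resulting filling is a standard Young tableau: the column
lengths are weakly decreasing from left to right (so the occupied boxes form a
Young diagram), the entries `1, …, n` are each used exactly once, and the entries
increase strictly along each row and down each column.
(The tableau is encoded as the list of its columns, each column a list of entries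
from top to bottom.)
-/

namespace ShiInsertion

/-- Insert the entry `i` into the leftmost column of `cols` whose bottom entry `r`
satisfies `y r − y i ≥ ℓ`, or into a new column at the right if there is none. -/
def step (ℓ : ℤ) (y : ℕ → ℤ) (i : ℕ) : List (List ℕ) → List (List ℕ)
  | [] => [[i]]
  | c :: rest =>
      if ℓ ≤ y (c.getLastD 0) - y i then (c ++ [i]) :: rest
      else c :: step ℓ y i rest

/-- Shi's insertion tableau of the point `y`, obtained by successively inserting
the entries `1, …, n`; it is given as the list of its columns (top to bottom). -/
def tableau (ℓ : ℤ) (y : ℕ → ℤ) (n : ℕ) : List (List ℕ) :=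
  ((List.range n).map (· + 1)).foldl (fun t i => step ℓ y i t) []

/-! By induction on the number of inserted entries, the columns stay strictly
increasing, each column is at least as long as the next one, and rows increase between
adjacent columns. The only delicate case is an entry `i + 1` that skips a column `u` and
lands at the bottom of the next column `v`: if `v` were as long as `u`, their bottom
entries `a < b` would lie in the same row, and `y` being decreasing gives
`y a - y (i + 1) > y b - y (i + 1) ≥ ℓ`, so `i + 1` would have gone into `u`. Hence `v` is
strictly shorter and `i + 1` lands in a row where `u` has a smaller entry. The relation
between adjacent columns is transitive, so rows increase across all columns. -/

def IsColumn (i : ℕ) (u : List ℕ) : Prop :=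
  u ≠ [] ∧ u.Pairwise (· < ·) ∧ ∀ a ∈ u, 1 ≤ a ∧ a ≤ i

def Precedes (u v : List ℕ) : Prop :=
  v.length ≤ u.length ∧ ∀ r a b : ℕ, u[r]? = some a → v[r]? = some b → a < b

/-- The invariant of the insertion once the entries `1, …, i` are placed. -/
def IsFilling (i : ℕ) (t : List (List ℕ)) : Prop :=
  (∀ u ∈ t, IsColumn i u) ∧ t.IsChain Precedes

lemma IsColumn.mono {i j : ℕ} (h : i ≤ j) {u : List ℕ} (hu : IsColumn i u) : IsColumn j u :=
  ⟨hu.1, hu.2.1, fun a ha => ⟨(hu.2.2 a ha).1, (hu.2.2 a ha).2.trans h⟩⟩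

lemma IsColumn.lt_succ {i : ℕ} {u : List ℕ} (hu : IsColumn i u) {a : ℕ} (ha : a ∈ u) :
    a < i + 1 :=
  Nat.lt_succ_of_le (hu.2.2 a ha).2

lemma IsColumn.append_succ {i : ℕ} {u : List ℕ} (hu : IsColumn i u) :
    IsColumn (i + 1) (u ++ [i + 1]) := by
  refine ⟨by simp, List.pairwise_append.2 ⟨hu.2.1, List.pairwise_singleton _ _, ?_⟩, ?_⟩
  · simpa using fun a ha => hu.lt_succ ha
  · intro a ha
    rcases List.mem_append.1 ha with ha | ha
    · exact (hu.mono i.le_succ).2.2 a ha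
    · simp only [List.mem_singleton] at ha
      omega

lemma getElem?_length_sub_one {u : List ℕ} (hu : u ≠ []) :
    u[u.length - 1]? = some (u.getLastD 0) := by
  rw [List.getLastD_eq_getLast?, ← List.getLast?_eq_getElem?, List.getLast?_eq_some_getLast hu]
  rfl

lemma Precedes.trans {u v w : List ℕ} (huv : Precedes u v) (hvw : Precedes v w) :
    Precedes u w := by
  refine ⟨hvw.1.trans huv.1, fun r a c ha hc => ?_⟩
  have hr : r < v.length := (List.getElem?_eq_some_iff.1 hc).1.trans_le hvw.1
  have hv : v[r]? = some v[r] := List.getElem?_eq_getElem hr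
  exact (huv.2 r a _ ha hv).trans (hvw.2 r _ c hv hc)

instance : Trans Precedes Precedes Precedes := ⟨Precedes.trans⟩

lemma Precedes.append_left {u v : List ℕ} (m : ℕ) (h : Precedes u v) :
    Precedes (u ++ [m]) v := by
  refine ⟨h.1.trans (by simp), fun r a b ha hb => h.2 r a b ?_ hb⟩
  have hr : r < v.length := (List.getElem?_eq_some_iff.1 hb).1
  rwa [List.getElem?_append_left (hr.trans_le h.1)] at ha

lemma IsColumn.precedes_singleton {i : ℕ} {u : List ℕ} (hu : IsColumn i u) :
    Precedes u [i + 1] := by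
  refine ⟨by simpa [Nat.one_le_iff_ne_zero] using hu.1, fun r a b ha hb => ?_⟩
  obtain ⟨hr, rfl⟩ := List.getElem?_eq_some_iff.1 hb
  obtain rfl : r = 0 := by simpa using hr
  exact hu.lt_succ (List.mem_of_getElem? ha)

lemma Precedes.append_succ {i : ℕ} {u v : List ℕ} (hu : IsColumn i u) (h : Precedes u v)
    (hlt : v.length < u.length) : Precedes u (v ++ [i + 1]) := by
  refine ⟨by simpa using hlt, fun r a b ha hb => ?_⟩
  rcases Nat.lt_or_ge r v.length with hr | hr
  · rw [List.getElem?_append_left hr] at hb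
    exact h.2 r a b ha hb
  · rw [List.getElem?_append_right hr] at hb
    obtain rfl : b = i + 1 := by simpa using (List.getElem?_eq_some_iff.1 hb).2.symm
    exact hu.lt_succ (List.mem_of_getElem? ha)

lemma Precedes.length_lt {ℓ : ℤ} {y : ℕ → ℤ} {n i : ℕ}
    (hy : StrictAntiOn y (Set.Icc 1 n)) (hin : i + 1 ≤ n) {u v : List ℕ}
    (hu : IsColumn i u) (hv : IsColumn i v) (h : Precedes u v)
    (hskip : ¬ ℓ ≤ y (u.getLastD 0) - y (i + 1))
    (hland : ℓ ≤ y (v.getLastD 0) - y (i + 1)) : v.length < u.length := by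
  refine h.1.lt_of_ne fun hlen => hskip ?_
  have hbottom : u.getLastD 0 < v.getLastD 0 :=
    h.2 _ _ _ (getElem?_length_sub_one hu.1) (hlen ▸ getElem?_length_sub_one hv.1)
  have hu_bottom := hu.2.2 _ (List.mem_of_getElem? (getElem?_length_sub_one hu.1))
  have hv_bottom := hv.2.2 _ (List.mem_of_getElem? (getElem?_length_sub_one hv.1))
  have hy_bottom := hy ⟨hu_bottom.1, by omega⟩ ⟨by omega, by omega⟩ hbottom
  omega

lemma precedes_head_step {ℓ : ℤ} {y : ℕ → ℤ} {n i : ℕ}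
    (hy : StrictAntiOn y (Set.Icc 1 n)) (hin : i + 1 ≤ n) {c : List ℕ} {t : List (List ℕ)}
    (hc : IsColumn i c) (hskip : ¬ ℓ ≤ y (c.getLastD 0) - y (i + 1))
    (ht : ∀ v ∈ t, IsColumn i v) (hhead : ∀ v ∈ t.head?, Precedes c v) :
    ∀ v ∈ (step ℓ y (i + 1) t).head?, Precedes c v := by
  match t with
  | [] => simpa [step] using hc.precedes_singleton
  | v :: t =>
    have hcv : Precedes c v := hhead v rfl
    rw [step]
    split_ifs with hland
    · simpa using hcv.append_succ hc (hcv.length_lt hy hin hc (ht v (by simp)) hskip hland)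
    · simpa using hcv

lemma IsFilling.step {ℓ : ℤ} {y : ℕ → ℤ} {n i : ℕ} (hy : StrictAntiOn y (Set.Icc 1 n))
    (hin : i + 1 ≤ n) {t : List (List ℕ)} (ht : IsFilling i t) :
    IsFilling (i + 1) (step ℓ y (i + 1) t) := by
  induction t with
  | nil =>
    refine ⟨fun u hu => ?_, by simp [ShiInsertion.step]⟩
    obtain rfl : u = [i + 1] := by simpa [ShiInsertion.step] using hu
    exact ⟨by simp, List.pairwise_singleton _ _, by simp⟩
  | cons c t ih =>
    obtain ⟨hcols, hchain⟩ := ht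
    rw [List.isChain_cons] at hchain
    have hc : IsColumn i c := hcols c (by simp)
    have ht : IsFilling i t := ⟨fun v hv => hcols v (by simp [hv]), hchain.2⟩
    rw [ShiInsertion.step]
    split_ifs with hland
    · refine ⟨?_, List.isChain_cons.2
        ⟨fun v hv => (hchain.1 v hv).append_left _, hchain.2⟩⟩
      simp only [List.mem_cons, forall_eq_or_imp]
      exact ⟨hc.append_succ, fun v hv => (ht.1 v hv).mono i.le_succ⟩
    · obtain ⟨hcols', hchain'⟩ := ih ht
      refine ⟨?_, List.isChain_cons.2
        ⟨precedes_head_step hy hin hc hland ht.1 hchain.1, hchain'⟩⟩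
      simp only [List.mem_cons, forall_eq_or_imp]
      exact ⟨hc.mono i.le_succ, hcols'⟩

lemma flatten_step_perm (ℓ : ℤ) (y : ℕ → ℤ) (m : ℕ) (t : List (List ℕ)) :
    (step ℓ y m t).flatten.Perm (m :: t.flatten) := by
  induction t with
  | nil => simp [step]
  | cons c t ih =>
    rw [step]
    split_ifs
    · simp only [List.flatten_cons, List.append_assoc, List.singleton_append]
      exact List.perm_middle (a := m) (l₁ := c) (l₂ := t.flatten)
    · exact (ih.append_left c).trans List.perm_middle

lemma tableau_succ (ℓ : ℤ) (y : ℕ → ℤ) (i : ℕ) :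
    tableau ℓ y (i + 1) = step ℓ y (i + 1) (tableau ℓ y i) := by
  simp [tableau, List.range_succ]

lemma isFilling_tableau {ℓ : ℤ} {y : ℕ → ℤ} {n : ℕ} (hy : StrictAntiOn y (Set.Icc 1 n))
    {i : ℕ} (hin : i ≤ n) : IsFilling i (tableau ℓ y i) := by
  induction i with
  | zero => simp [IsFilling, tableau]
  | succ i ih =>
    rw [tableau_succ]
    exact (ih (by omega)).step hy hin

lemma flatten_tableau_perm (ℓ : ℤ) (y : ℕ → ℤ) (i : ℕ) :
    (tableau ℓ y i).flatten.Perm ((List.range i).map (· + 1)) := by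
  induction i with
  | zero => simp [tableau]
  | succ i ih =>
    rw [tableau_succ, List.range_succ, List.map_append]
    exact (flatten_step_perm ℓ y (i + 1) _).trans
      ((ih.cons (i + 1)).trans (List.perm_append_singleton _ _).symm)

lemma precedes_getD_of_pairwise {t : List (List ℕ)} (ht : t.Pairwise Precedes) {j k : ℕ}
    (hjk : j < k) : Precedes (t.getD j []) (t.getD k []) := by
  rcases Nat.lt_or_ge k t.length with hk | hk
  · rw [List.getD_eq_getElem _ _ (hjk.trans hk), List.getD_eq_getElem _ _ hk]
    exact List.pairwise_iff_getElem.1 ht j k _ hk hjk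
  · rw [List.getD_eq_default _ _ hk]
    exact ⟨Nat.zero_le _, by simp⟩

end ShiInsertion

theorem shi_insertion_standard_tableau_general
    (ℓ : ℤ) (n : ℕ)
    (y : ℕ → ℤ) (hy : ∀ i j, 1 ≤ i → i < j → j ≤ n → y j < y i) :
    -- the column lengths weakly decrease from left to right,
    -- so the occupied boxes form a Young diagram
    (∀ j : ℕ, ((ShiInsertion.tableau ℓ y n).getD (j + 1) []).length ≤
        ((ShiInsertion.tableau ℓ y n).getD j []).length) ∧
    -- the entries are `1, …, n`, each used exactly once
    (ShiInsertion.tableau ℓ y n).flatten.Perm ((List.range n).map (· + 1)) ∧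
    -- the entries strictly increase down each column
    (∀ c ∈ ShiInsertion.tableau ℓ y n, c.Pairwise (· < ·)) ∧
    -- the entries strictly increase along each row
    (∀ j k r : ℕ, j < k →
        ∀ a b : ℕ,
          ((ShiInsertion.tableau ℓ y n).getD j [])[r]? = some a →
          ((ShiInsertion.tableau ℓ y n).getD k [])[r]? = some b →
          a < b) := by
  have hanti : StrictAntiOn y (Set.Icc 1 n) := fun a ha b hb hab => hy a b ha.1 hab hb.2
  obtain ⟨hcols, hchain⟩ := ShiInsertion.isFilling_tableau (ℓ := ℓ) hanti le_rfl
  have hrows := hchain.pairwise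
  exact ⟨fun j => (ShiInsertion.precedes_getD_of_pairwise hrows j.lt_succ_self).1,
    ShiInsertion.flatten_tableau_perm ℓ y n, fun u hu => (hcols u hu).2.1,
    fun j k r hjk => (ShiInsertion.precedes_getD_of_pairwise hrows hjk).2 r⟩

theorem shi_insertion_standard_tableau
    (ℓ : ℤ) (hℓ : 1 ≤ ℓ) (n : ℕ) (hn : 1 ≤ n)
    (y : ℕ → ℤ) (hy : ∀ i j, 1 ≤ i → i < j → j ≤ n → y j < y i) :
    -- the column lengths weakly decrease from left to right,
    -- so the occupied boxes form a Young diagram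
    (∀ j : ℕ, ((ShiInsertion.tableau ℓ y n).getD (j + 1) []).length ≤
        ((ShiInsertion.tableau ℓ y n).getD j []).length) ∧
    -- the entries are `1, …, n`, each used exactly once
    (ShiInsertion.tableau ℓ y n).flatten.Perm ((List.range n).map (· + 1)) ∧
    -- the entries strictly increase down each column
    (∀ c ∈ ShiInsertion.tableau ℓ y n, c.Pairwise (· < ·)) ∧
    -- the entries strictly increase along each row
    (∀ j k r : ℕ, j < k →
        ∀ a b : ℕ,
          ((ShiInsertion.tableau ℓ y n).getD j [])[r]? = some a →
          ((ShiInsertion.tableau ℓ y n).getD k [])[r]? = some b →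
          a < b) :=
  shi_insertion_standard_tableau_general ℓ n y hy
end
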